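/- arXiv:hep-th/0011267 — 5 statements merged into one kernel-verified Lean document; each statement's English description precedes it below -/
import Mathlib

section
/- Let L be a ℤ/2-graded unital algebra, D, θ odd elements of L, and g an invertible even element of R ⊗ L₊. With θ^g = g⁻¹θg + g⁻¹[D,g] and ω = g⁻¹dg in Ω(R) ⊗̂ L, the BRS relations hold: d(θ^g) = −[D + θ^g, ω] and dω = −ω², where d denotes d ⊗ Id and brackets are graded commutators. -/
/-! The key observation is that `D + θ^g = g⁻¹ (D + θ) g`: the shifted gauge field is the
conjugate of the closed odd element `A = D + θ`. Differentiating `g⁻¹ A g` with the Leibniz rule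
and `d(g⁻¹) = -g⁻¹ (dg) g⁻¹`, the two terms are `-ω A^g` and `-A^g ω` (the odd `A` passes
`d` with a sign), and `dD = 0` gives `d(θ^g) = d(A^g)`. The same rule applied to `ω = g⁻¹ dg`
with `d² = 0` gives the Maurer–Cartan equation. -/

section Leibniz

variable {W : Type*} [Ring W] {d : W → W} {g g' : W}

theorem map_inverse_of_leibniz (hd1 : d 1 = 0)
    (hleib : ∀ b, d (g' * b) = d g' * b + g' * d b) (hgg' : g * g' = 1) (hg'g : g' * g = 1) :
    d g' = -(g' * d g * g') := by
  have h : d g' * g = -(g' * d g) :=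
    eq_neg_of_add_eq_zero_left (by rw [← hleib, hg'g, hd1])
  calc d g' = d g' * g * g' := by rw [mul_assoc, hgg', mul_one]
    _ = -(g' * d g * g') := by rw [h, neg_mul]

theorem maurerCartan_of_leibniz (hdg' : d g' = -(g' * d g * g'))
    (hleib : ∀ b, d (g' * b) = d g' * b + g' * d b) (hdd : d (d g) = 0) :
    d (g' * d g) = -(g' * d g * (g' * d g)) := by
  rw [hleib, hdg', hdd, mul_zero, add_zero, neg_mul, mul_assoc]

theorem map_conj_of_leibniz {A : W} (hdg' : d g' = -(g' * d g * g'))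
    (hleib : ∀ b, d (g' * b) = d g' * b + g' * d b)
    (hleibA : ∀ b, d (A * b) = d A * b - A * d b) (hdA : d A = 0) (hgg' : g * g' = 1) :
    d (g' * A * g) = -(g' * A * g * (g' * d g) + g' * d g * (g' * A * g)) := by
  have hcancel : g' * A * g * (g' * d g) = g' * A * d g := by
    rw [mul_assoc, mul_assoc, ← mul_assoc g g', hgg', one_mul, ← mul_assoc]
  rw [hcancel, mul_assoc, hleib, hleibA, hdA, hdg']
  noncomm_ring

end Leibniz

theorem brs_relations_general (W : Type) [Ring W] [Algebra ℂ W]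
    (𝒲 : ZMod 2 → Submodule ℂ W) (d : W →ₗ[ℂ] W)
    (hd1 : d 1 = 0)
    (hd2 : ∀ w, d (d w) = 0)
    (hleib0 : ∀ a ∈ 𝒲 0, ∀ b, d (a * b) = d a * b + a * d b)
    (hleib1 : ∀ a ∈ 𝒲 1, ∀ b, d (a * b) = d a * b - a * d b)
    (D θ : W) (hD : D ∈ 𝒲 1) (hθ : θ ∈ 𝒲 1) (hdD : d D = 0) (hdθ : d θ = 0)
    (g g' : W) (hg' : g' ∈ 𝒲 0)
    (hgg' : g * g' = 1) (hg'g : g' * g = 1) :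
    d (g' * θ * g + g' * (D * g - g * D))
      = -((D + (g' * θ * g + g' * (D * g - g * D))) * (g' * d g)
          + (g' * d g) * (D + (g' * θ * g + g' * (D * g - g * D)))) ∧
    d (g' * d g) = -((g' * d g) * (g' * d g)) := by
  have hleib := hleib0 g' hg'
  have hdg' := map_inverse_of_leibniz hd1 hleib hgg' hg'g
  have hconj : D + (g' * θ * g + g' * (D * g - g * D)) = g' * (D + θ) * g := by
    rw [mul_sub, ← mul_assoc g' g, hg'g, one_mul]
    noncomm_ring
  have hgauge : g' * θ * g + g' * (D * g - g * D) = g' * (D + θ) * g - D := by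
    rw [← hconj, add_sub_cancel_left]
  refine ⟨?_, maurerCartan_of_leibniz hdg' hleib (hd2 g)⟩
  rw [hconj, hgauge, map_sub, hdD, sub_zero]
  exact map_conj_of_leibniz hdg' hleib (hleib1 _ (add_mem hD hθ))
    (by rw [map_add, hdD, hdθ, add_zero]) hgg'

theorem brs_relations (W : Type) [Ring W] [Algebra ℂ W]
    (𝒲 : ZMod 2 → Submodule ℂ W) (d : W →ₗ[ℂ] W)
    (hdeg : ∀ i, ∀ w ∈ 𝒲 i, d w ∈ 𝒲 (i + 1))
    (hd1 : d 1 = 0)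
    (hd2 : ∀ w, d (d w) = 0)
    (hleib0 : ∀ a ∈ 𝒲 0, ∀ b, d (a * b) = d a * b + a * d b)
    (hleib1 : ∀ a ∈ 𝒲 1, ∀ b, d (a * b) = d a * b - a * d b)
    (D θ : W) (hD : D ∈ 𝒲 1) (hθ : θ ∈ 𝒲 1) (hdD : d D = 0) (hdθ : d θ = 0)
    (g g' : W) (hg : g ∈ 𝒲 0) (hg' : g' ∈ 𝒲 0)
    (hgg' : g * g' = 1) (hg'g : g' * g = 1) :
    d (g' * θ * g + g' * (D * g - g * D))
      = -((D + (g' * θ * g + g' * (D * g - g * D))) * (g' * d g)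
          + (g' * d g) * (D + (g' * θ * g + g' * (D * g - g * D)))) ∧
    d (g' * d g) = -((g' * d g) * (g' * d g)) :=
  brs_relations_general W 𝒲 d hd1 hd2 hleib0 hleib1 D θ hD hθ hdD hdθ g g' hg' hgg' hg'g
end

section
/- With superconnection ∇ = d + D + t(ω + θ^g), the curvature ∇² := d(D + t(ω+θ^g)) + (D + t(ω+θ^g))² equals (t² − t)(ω² + [ω, θ^g]) + (D + t θ^g)². In particular for t = 0 and t = 1 the curvature lies in R ⊗ L₊ (the 'Russian formula'): ∇²|_{t=0} = D² and ∇²|_{t=1} = (D + θ^g)². -/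
/-! Writing `A = D + θ`, one has `D + θ^g = g⁻¹ A g`, so `d(D + θ^g) = -[D + θ^g, ω]` follows from
`dA = 0` and `d(g⁻¹) = -g⁻¹ (dg) g⁻¹`, while `dω = -ω²` is the Maurer–Cartan equation. With these two
relations the curvature formula is a direct expansion in `t`, in which `-t[D, ω]` from the derivative
cancels against the square. -/

section GradedDerivation

variable {R W : Type*} [Semiring R] [Ring W] [Module R W]
  {𝒲 : ZMod 2 → Submodule R W} {d : W →ₗ[R] W}

theorem map_inv_of_even (hd1 : d 1 = 0)
    (hleib0 : ∀ a ∈ 𝒲 0, ∀ b, d (a * b) = d a * b + a * d b)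
    {g g' : W} (hg' : g' ∈ 𝒲 0) (hgg' : g * g' = 1) (hg'g : g' * g = 1) :
    d g' = -(g' * d g * g') := by
  have h : d g' * g = -(g' * d g) := by
    rw [eq_neg_iff_add_eq_zero, ← hleib0 g' hg' g, hg'g, hd1]
  calc d g' = d g' * g * g' := by rw [mul_assoc, hgg', mul_one]
    _ = -(g' * d g * g') := by rw [h, neg_mul]

theorem map_maurerCartan (hd1 : d 1 = 0) (hd2 : ∀ w, d (d w) = 0)
    (hleib0 : ∀ a ∈ 𝒲 0, ∀ b, d (a * b) = d a * b + a * d b)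
    {g g' : W} (hg' : g' ∈ 𝒲 0) (hgg' : g * g' = 1) (hg'g : g' * g = 1) :
    d (g' * d g) = -(g' * d g * (g' * d g)) := by
  rw [hleib0 g' hg' (d g), hd2, mul_zero, add_zero, map_inv_of_even hd1 hleib0 hg' hgg' hg'g]
  noncomm_ring

theorem map_conj_of_odd_of_map_eq_zero (hd1 : d 1 = 0)
    (hleib0 : ∀ a ∈ 𝒲 0, ∀ b, d (a * b) = d a * b + a * d b)
    (hleib1 : ∀ a ∈ 𝒲 1, ∀ b, d (a * b) = d a * b - a * d b)
    {g g' : W} (hg' : g' ∈ 𝒲 0) (hgg' : g * g' = 1) (hg'g : g' * g = 1)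
    {A : W} (hA : A ∈ 𝒲 1) (hdA : d A = 0) :
    d (g' * A * g) = -(g' * A * g * (g' * d g) + g' * d g * (g' * A * g)) := by
  have hAg : g' * A * d g = g' * A * g * (g' * d g) := by
    rw [← mul_assoc, mul_assoc (g' * A) g g', hgg', mul_one]
  rw [mul_assoc g' A g, hleib0 g' hg', hleib1 A hA, hdA, zero_mul, zero_sub,
    map_inv_of_even hd1 hleib0 hg' hgg' hg'g, mul_neg, ← mul_assoc g' A (d g), hAg,
    ← mul_assoc g' A g]
  noncomm_ring

end GradedDerivation

theorem add_gauge_eq_conj {W : Type*} [Ring W] {g g' : W} (hg'g : g' * g = 1) (D θ : W) :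
    D + (g' * θ * g + g' * (D * g - g * D)) = g' * (D + θ) * g := by
  have : g' * (g * D) = D := by rw [← mul_assoc, hg'g, one_mul]
  rw [mul_sub, this]
  noncomm_ring

theorem curvature_eq_of_brs {R W : Type*} [CommRing R] [Ring W] [Algebra R W] {d : W →ₗ[R] W}
    {D ω θ : W} (hdD : d D = 0) (hdω : d ω = -(ω * ω))
    (hdθ : d θ = -((D + θ) * ω + ω * (D + θ))) (t : R) :
    d (D + t • (ω + θ)) + (D + t • (ω + θ)) * (D + t • (ω + θ))
      = (t ^ 2 - t) • (ω * ω + (ω * θ + θ * ω)) + (D + t • θ) * (D + t • θ) := by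
  rw [map_add, map_smul, map_add, hdD, hdω, hdθ]
  simp only [smul_add, smul_neg, mul_add, add_mul, mul_smul_comm, smul_mul_assoc, smul_smul,
    sub_smul]
  module

theorem superconnection_curvature_general (W : Type) [Ring W] [Algebra ℂ W]
    (𝒲 : ZMod 2 → Submodule ℂ W) (d : W →ₗ[ℂ] W)
    (hd1 : d 1 = 0)
    (hd2 : ∀ w, d (d w) = 0)
    (hleib0 : ∀ a ∈ 𝒲 0, ∀ b, d (a * b) = d a * b + a * d b)
    (hleib1 : ∀ a ∈ 𝒲 1, ∀ b, d (a * b) = d a * b - a * d b)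
    (D θ : W) (hD : D ∈ 𝒲 1) (hθ : θ ∈ 𝒲 1) (hdD : d D = 0) (hdθ : d θ = 0)
    (g g' : W) (hg' : g' ∈ 𝒲 0)
    (hgg' : g * g' = 1) (hg'g : g' * g = 1) (t : ℂ) :
    let ω := g' * d g
    let θg := g' * θ * g + g' * (D * g - g * D)
    (d (D + t • (ω + θg)) + (D + t • (ω + θg)) * (D + t • (ω + θg))
        = (t ^ 2 - t) • (ω * ω + (ω * θg + θg * ω)) + (D + t • θg) * (D + t • θg)) ∧
    (d D + D * D = D * D) ∧
    (d (D + (ω + θg)) + (D + (ω + θg)) * (D + (ω + θg)) = (D + θg) * (D + θg)) := by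
  intro ω θg
  have hdω : d ω = -(ω * ω) := map_maurerCartan hd1 hd2 hleib0 hg' hgg' hg'g
  have hconj : D + θg = g' * (D + θ) * g := add_gauge_eq_conj hg'g D θ
  have hdθg : d θg = -((D + θg) * ω + ω * (D + θg)) := by
    have h := map_conj_of_odd_of_map_eq_zero hd1 hleib0 hleib1 hg' hgg' hg'g
      (add_mem hD hθ) (by rw [map_add, hdD, hdθ, add_zero])
    rwa [← hconj, map_add, hdD, zero_add] at h
  have hcurv := curvature_eq_of_brs hdD hdω hdθg
  refine ⟨hcurv t, by rw [hdD, zero_add], ?_⟩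
  simpa using hcurv 1

theorem superconnection_curvature (W : Type) [Ring W] [Algebra ℂ W]
    (𝒲 : ZMod 2 → Submodule ℂ W) (d : W →ₗ[ℂ] W)
    (hdeg : ∀ i, ∀ w ∈ 𝒲 i, d w ∈ 𝒲 (i + 1))
    (hd1 : d 1 = 0)
    (hd2 : ∀ w, d (d w) = 0)
    (hleib0 : ∀ a ∈ 𝒲 0, ∀ b, d (a * b) = d a * b + a * d b)
    (hleib1 : ∀ a ∈ 𝒲 1, ∀ b, d (a * b) = d a * b - a * d b)
    (D θ : W) (hD : D ∈ 𝒲 1) (hθ : θ ∈ 𝒲 1) (hdD : d D = 0) (hdθ : d θ = 0)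
    (g g' : W) (hg : g ∈ 𝒲 0) (hg' : g' ∈ 𝒲 0)
    (hgg' : g * g' = 1) (hg'g : g' * g = 1) (t : ℂ) :
    let ω := g' * d g
    let θg := g' * θ * g + g' * (D * g - g * D)
    (d (D + t • (ω + θg)) + (D + t • (ω + θg)) * (D + t • (ω + θg))
        = (t ^ 2 - t) • (ω * ω + (ω * θg + θg * ω)) + (D + t • θg) * (D + t • θg)) ∧
    (d D + D * D = D * D) ∧
    (d (D + (ω + θg)) + (D + (ω + θg)) * (D + (ω + θg)) = (D + θg) * (D + θg)) :=
  superconnection_curvature_general W 𝒲 d hd1 hd2 hleib0 hleib1 D θ hD hθ hdD hdθ g g' hg' hgg' hg'g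
    t
end

section
/- Let A be a unital ℂ-algebra and g ∈ A invertible (or more generally g ∈ A ⊗ L₊ invertible). In the quotient Rₙ = RA/IA^{n+1} ≅ ⊕_{k=0}^{n} Ω^{2k}(A) with the induced Fedosov product, the element gₙ (the image of g) is invertible with inverse (gₙ)⁻¹ = Σ_{k=0}^{n} g⁻¹ (dg dg⁻¹)^k. -/
/-!
Write `e = dg`, `f = dg⁻¹` and `S = ∑_{k ≤ n} (e f)^k`, so that the candidate inverse is `g⁻¹ S`,
whose differential is `f S`. Then `g ∘ g⁻¹S = S - e f S = (1 - e f) S` telescopes to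
`1 - (e f)^(n+1)`. Applying `d` to `g g⁻¹ = 1` and `g⁻¹ g = 1` gives `e g⁻¹ = -g f` and
`f g = -g⁻¹ e`, so `g` intertwines `f e` with `e f`, and `g⁻¹S ∘ g` telescopes to
`1 - (f e)^(n+1)`. Both error terms are forms of degree `2n + 2`.
-/

open Finset

theorem SemiconjBy.mul_geom_sum {R : Type*} [Semiring R] {a x y : R} (h : SemiconjBy a x y)
    (n : ℕ) : a * ∑ k ∈ range n, x ^ k = (∑ k ∈ range n, y ^ k) * a := by
  rw [mul_sum, sum_mul]
  exact sum_congr rfl fun k _ => h.pow_right k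

section FedosovInverse

variable {R : Type*} [Ring R] {a b e f : R}

theorem mul_sub_mul_geom_sum_eq (hab : a * b = 1) (n : ℕ) :
    a * (b * ∑ k ∈ range n, (e * f) ^ k) - e * (f * ∑ k ∈ range n, (e * f) ^ k) - 1
      = -(e * f) ^ n := by
  rw [← mul_assoc, hab, one_mul, ← mul_assoc, ← one_sub_mul, mul_neg_geom_sum]
  abel

theorem geom_sum_mul_sub_mul_eq (hba : b * a = 1) (heb : e * b = -(a * f))
    (hfa : f * a = -(b * e)) (n : ℕ) :
    b * (∑ k ∈ range n, (e * f) ^ k) * a - f * (∑ k ∈ range n, (e * f) ^ k) * e - 1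
      = -(f * e) ^ n := by
  have hsemiconj : SemiconjBy a (f * e) (e * f) := by
    calc a * (f * e) = -(e * b) * e := by rw [heb]; noncomm_ring
      _ = e * f * a := by rw [mul_assoc e, hfa, mul_neg, neg_mul, mul_assoc]
  have hswap : SemiconjBy f (e * f) (f * e) := (mul_assoc f e f).symm
  rw [mul_assoc b, ← hsemiconj.mul_geom_sum, ← mul_assoc, hba, one_mul,
    hswap.mul_geom_sum, mul_assoc, ← mul_one_sub, geom_sum_mul_neg]
  abel

end FedosovInverse

theorem List.prod_map_flatten_replicate_pair {α M : Type*} [Monoid M] (φ : α → M) (x y : α)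
    (k : ℕ) : ((List.replicate k [x, y]).flatten.map φ).prod = (φ x * φ y) ^ k := by
  simp [List.map_flatten, List.prod_flatten, List.map_replicate, List.prod_replicate]

section UniversalForms

variable {A Ω : Type} [Ring A] [Algebra ℂ A] [Ring Ω] [Algebra ℂ Ω] (ι : A →ₐ[ℂ] Ω)
  (d : Ω →ₗ[ℂ] Ω)

theorem d_mul_eq_neg_mul_d (hd1 : d 1 = 0)
    (hbase : ∀ x y : A, d (ι x) * ι y = d (ι (x * y)) - ι x * d (ι y))
    {g g' : A} (hgg' : g * g' = 1) : d (ι g) * ι g' = -(ι g * d (ι g')) := by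
  rw [hbase, hgg', map_one, hd1, zero_sub]

theorem d_mul_pow_d_mul_d
    (hdrule : ∀ (x₀ : A) (l : List A),
      d (ι x₀ * (l.map (fun x => d (ι x))).prod) = d (ι x₀) * (l.map (fun x => d (ι x))).prod)
    (x₀ x y : A) (k : ℕ) :
    d (ι x₀ * (d (ι x) * d (ι y)) ^ k) = d (ι x₀) * (d (ι x) * d (ι y)) ^ k := by
  simpa only [List.prod_map_flatten_replicate_pair] using
    hdrule x₀ (List.replicate k [x, y]).flatten

theorem pow_d_mul_d_mem (𝒜 : ℕ → Submodule ℂ Ω)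
    (hgrade : ∀ n, 𝒜 n = Submodule.span ℂ
      {w | ∃ (x₀ : A) (l : List A), l.length = n ∧ w = ι x₀ * (l.map (fun x => d (ι x))).prod})
    (x y : A) (k : ℕ) : (d (ι x) * d (ι y)) ^ k ∈ 𝒜 (2 * k) := by
  rw [hgrade]
  refine Submodule.subset_span ⟨1, (List.replicate k [x, y]).flatten, ?_, ?_⟩
  · simp [mul_comm]
  · rw [List.prod_map_flatten_replicate_pair, map_one, one_mul]

end UniversalForms

theorem truncated_inverse_in_quotient_general (A Ω : Type) [Ring A] [Algebra ℂ A] [Ring Ω] [Algebra ℂ Ω]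
    (ι : A →ₐ[ℂ] Ω) (d : Ω →ₗ[ℂ] Ω) (𝒜 : ℕ → Submodule ℂ Ω)
    (hgrade : ∀ n, 𝒜 n = Submodule.span ℂ
      {w | ∃ (x₀ : A) (l : List A), l.length = n ∧ w = ι x₀ * (l.map (fun x => d (ι x))).prod})
    (hd1 : d 1 = 0)
    (hdrule : ∀ (x₀ : A) (l : List A),
      d (ι x₀ * (l.map (fun x => d (ι x))).prod) = d (ι x₀) * (l.map (fun x => d (ι x))).prod)
    (hbase : ∀ x y : A, d (ι x) * ι y = d (ι (x * y)) - ι x * d (ι y))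
    (g g' : A) (hgg' : g * g' = 1) (hg'g : g' * g = 1) (n : ℕ) :
    (ι g * (∑ k ∈ Finset.range (n + 1), ι g' * (d (ι g) * d (ι g')) ^ k)
        - d (ι g) * d (∑ k ∈ Finset.range (n + 1), ι g' * (d (ι g) * d (ι g')) ^ k)) - 1
      ∈ (⨆ k, 𝒜 (2 * (n + 1) + 2 * k)) ∧
    ((∑ k ∈ Finset.range (n + 1), ι g' * (d (ι g) * d (ι g')) ^ k) * ι g
        - d (∑ k ∈ Finset.range (n + 1), ι g' * (d (ι g) * d (ι g')) ^ k) * d (ι g)) - 1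
      ∈ (⨆ k, 𝒜 (2 * (n + 1) + 2 * k)) := by
  have hd_sum : d (∑ k ∈ range (n + 1), ι g' * (d (ι g) * d (ι g')) ^ k)
      = d (ι g') * ∑ k ∈ range (n + 1), (d (ι g) * d (ι g')) ^ k := by
    rw [map_sum, mul_sum]
    exact sum_congr rfl fun k _ => d_mul_pow_d_mul_d ι d hdrule g' g g' k
  have hmem : ∀ x y : A, -(d (ι x) * d (ι y)) ^ (n + 1) ∈ ⨆ k, 𝒜 (2 * (n + 1) + 2 * k) :=
    fun x y => neg_mem <|
      le_iSup (fun k => 𝒜 (2 * (n + 1) + 2 * k)) 0 (pow_d_mul_d_mem ι d 𝒜 hgrade x y (n + 1))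
  have hι : ι g * ι g' = 1 := by rw [← map_mul, hgg', map_one]
  have hι' : ι g' * ι g = 1 := by rw [← map_mul, hg'g, map_one]
  rw [hd_sum, ← mul_sum]
  constructor
  · rw [mul_sub_mul_geom_sum_eq hι]
    exact hmem g g'
  · rw [geom_sum_mul_sub_mul_eq hι' (d_mul_eq_neg_mul_d ι d hd1 hbase hgg')
      (d_mul_eq_neg_mul_d ι d hd1 hbase hg'g)]
    exact hmem g' g

theorem truncated_inverse_in_quotient (A Ω : Type) [Ring A] [Algebra ℂ A] [Ring Ω] [Algebra ℂ Ω]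
    (ι : A →ₐ[ℂ] Ω) (d : Ω →ₗ[ℂ] Ω) (𝒜 : ℕ → Submodule ℂ Ω)
    (hgrade : ∀ n, 𝒜 n = Submodule.span ℂ
      {w | ∃ (x₀ : A) (l : List A), l.length = n ∧ w = ι x₀ * (l.map (fun x => d (ι x))).prod})
    (htop : (⨆ n, 𝒜 n) = (⊤ : Submodule ℂ Ω))
    (hd1 : d 1 = 0)
    (hdrule : ∀ (x₀ : A) (l : List A),
      d (ι x₀ * (l.map (fun x => d (ι x))).prod) = d (ι x₀) * (l.map (fun x => d (ι x))).prod)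
    (hbase : ∀ x y : A, d (ι x) * ι y = d (ι (x * y)) - ι x * d (ι y))
    (hdeg : ∀ n, ∀ w ∈ 𝒜 n, d w ∈ 𝒜 (n + 1))
    (hmul : ∀ m n, ∀ a ∈ 𝒜 m, ∀ b ∈ 𝒜 n, a * b ∈ 𝒜 (m + n))
    (hd2 : ∀ w, d (d w) = 0)
    (hleib : ∀ n, ∀ a ∈ 𝒜 n, ∀ b, d (a * b) = d a * b + ((-1 : ℂ) ^ n) • (a * d b))
    (g g' : A) (hgg' : g * g' = 1) (hg'g : g' * g = 1) (n : ℕ) :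
    (ι g * (∑ k ∈ Finset.range (n + 1), ι g' * (d (ι g) * d (ι g')) ^ k)
        - d (ι g) * d (∑ k ∈ Finset.range (n + 1), ι g' * (d (ι g) * d (ι g')) ^ k)) - 1
      ∈ (⨆ k, 𝒜 (2 * (n + 1) + 2 * k)) ∧
    ((∑ k ∈ Finset.range (n + 1), ι g' * (d (ι g) * d (ι g')) ^ k) * ι g
        - d (∑ k ∈ Finset.range (n + 1), ι g' * (d (ι g) * d (ι g')) ^ k) * d (ι g)) - 1
      ∈ (⨆ k, 𝒜 (2 * (n + 1) + 2 * k)) :=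
  truncated_inverse_in_quotient_general A Ω ι d 𝒜 hgrade hd1 hdrule hbase g g' hgg' hg'g n
end

section
/- In the universal DG algebra Ω(A) over a unital algebra A with invertible g, for the Fedosov product ∘ one has g ∘ (Σ_{k=0}^{n} g⁻¹(dg dg⁻¹)^k) = 1 modulo forms of degree > 2n; equivalently, in the completion R̂A = Π_{n≥0} Ω²ⁿ(A), ĝ = g is invertible with ĝ⁻¹ = Σ_{k=0}^{∞} g⁻¹(dg dg⁻¹)^k. -/
/- STATEMENT 14: In the completion R̂A = Π_(n≥0) Ω²ⁿ(A) with the Fedosov product,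
ĝ = g is invertible with ĝ⁻¹ = Σ_(k≥0) g⁻¹(dg dg⁻¹)^k: for every n, the Fedosov
product of g with the partial sum Σ_(k=0)^n g⁻¹(dg dg⁻¹)^k equals 1 modulo forms of
degree > 2n, and likewise on the other side. -/
theorem completed_inverse (A Ω : Type) [Ring A] [Algebra ℂ A] [Ring Ω] [Algebra ℂ Ω]
    (ι : A →ₐ[ℂ] Ω) (d : Ω →ₗ[ℂ] Ω) (𝒜 : ℕ → Submodule ℂ Ω)
    (hgrade : ∀ n, 𝒜 n = Submodule.span ℂ
      {w | ∃ (x₀ : A) (l : List A), l.length = n ∧ w = ι x₀ * (l.map (fun x => d (ι x))).prod})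
    (htop : (⨆ n, 𝒜 n) = (⊤ : Submodule ℂ Ω))
    (hd1 : d 1 = 0)
    (hdrule : ∀ (x₀ : A) (l : List A),
      d (ι x₀ * (l.map (fun x => d (ι x))).prod) = d (ι x₀) * (l.map (fun x => d (ι x))).prod)
    (hbase : ∀ x y : A, d (ι x) * ι y = d (ι (x * y)) - ι x * d (ι y))
    (hdeg : ∀ n, ∀ w ∈ 𝒜 n, d w ∈ 𝒜 (n + 1))
    (hmul : ∀ m n, ∀ a ∈ 𝒜 m, ∀ b ∈ 𝒜 n, a * b ∈ 𝒜 (m + n))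
    (hd2 : ∀ w, d (d w) = 0)
    (hleib : ∀ n, ∀ a ∈ 𝒜 n, ∀ b, d (a * b) = d a * b + ((-1 : ℂ) ^ n) • (a * d b))
    (g g' : A) (hgg' : g * g' = 1) (hg'g : g' * g = 1) :
    ∀ n : ℕ,
    (ι g * (∑ k ∈ Finset.range (n + 1), ι g' * (d (ι g) * d (ι g')) ^ k)
        - d (ι g) * d (∑ k ∈ Finset.range (n + 1), ι g' * (d (ι g) * d (ι g')) ^ k)) - 1
      ∈ (⨆ k, 𝒜 (2 * (n + 1) + 2 * k)) ∧
    ((∑ k ∈ Finset.range (n + 1), ι g' * (d (ι g) * d (ι g')) ^ k) * ι g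
        - d (∑ k ∈ Finset.range (n + 1), ι g' * (d (ι g) * d (ι g')) ^ k) * d (ι g)) - 1
      ∈ (⨆ k, 𝒜 (2 * (n + 1) + 2 * k)) := by
  intro n
  set ω := d (ι g) * d (ι g') with hωdef
  set η := d (ι g') * d (ι g) with hηdef
  have h0 : ∀ x : A, ι x ∈ 𝒜 0 := by
    intro x
    rw [hgrade 0]
    exact Submodule.subset_span ⟨x, [], rfl, by simp⟩
  have h1mem : (1 : Ω) ∈ 𝒜 0 := by simpa using h0 1
  have hdg : d (ι g) ∈ 𝒜 1 := hdeg 0 _ (h0 g)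
  have hdg' : d (ι g') ∈ 𝒜 1 := hdeg 0 _ (h0 g')
  have hωm : ω ∈ 𝒜 2 := hmul 1 1 _ hdg _ hdg'
  have hηm : η ∈ 𝒜 2 := hmul 1 1 _ hdg' _ hdg
  have hpow : ∀ (x : Ω), x ∈ 𝒜 2 → ∀ k, x ^ k ∈ 𝒜 (2 * k) := by
    intro x hx k
    induction k with
    | zero => simpa using h1mem
    | succ k ih =>
      have h := hmul (2 * k) 2 _ ih _ hx
      rw [pow_succ, (by ring : 2 * (k + 1) = 2 * k + 2)]
      exact h
  -- derivative facts
  have hdω : d ω = 0 := by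
    have h := hleib 1 _ hdg (d (ι g'))
    simpa [hd2] using h
  have hdωpow : ∀ k, d (ω ^ k) = 0 := by
    intro k
    induction k with
    | zero => simpa using hd1
    | succ k ih =>
      rw [pow_succ, hleib (2 * k) _ (hpow ω hωm k) ω, ih, hdω]
      simp
  have hdS : ∀ k, d (ι g' * ω ^ k) = d (ι g') * ω ^ k := by
    intro k
    rw [hleib 0 _ (h0 g') (ω ^ k), hdωpow k]
    simp
  -- key commutation identities
  have hb1 : d (ι g') * ι g = -(ι g' * d (ι g)) := by
    have h := hbase g' g
    rw [hg'g, map_one, hd1] at h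
    simpa using h
  have hb2 : d (ι g) * ι g' = -(ι g * d (ι g')) := by
    have h := hbase g g'
    rw [hgg', map_one, hd1] at h
    simpa using h
  have hωg : ω * ι g = ι g * η := by
    rw [hωdef, hηdef, mul_assoc, hb1, mul_neg, ← mul_assoc, hb2, neg_mul, neg_neg,
      mul_assoc]
  have hωkg : ∀ k, ω ^ k * ι g = ι g * η ^ k := by
    intro k
    induction k with
    | zero => simp
    | succ k ih =>
      rw [pow_succ', mul_assoc, ih, ← mul_assoc, hωg, mul_assoc, ← pow_succ']
  have hcomm : ∀ k, d (ι g') * ω ^ k = η ^ k * d (ι g') := by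
    intro k
    induction k with
    | zero => simp
    | succ k ih =>
      rw [pow_succ', ← mul_assoc, show d (ι g') * ω = η * d (ι g') by
        rw [hωdef, hηdef, ← mul_assoc], mul_assoc, ih, ← mul_assoc, ← pow_succ']
  -- term computations
  have hterm1 : ∀ k, ι g * (ι g' * ω ^ k) = ω ^ k := by
    intro k
    rw [← mul_assoc, ← map_mul, hgg', map_one, one_mul]
  have hterm2 : ∀ k, d (ι g) * (d (ι g') * ω ^ k) = ω ^ (k + 1) := by
    intro k
    rw [← mul_assoc, ← hωdef, ← pow_succ']
  have hterm3 : ∀ k, (ι g' * ω ^ k) * ι g = η ^ k := by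
    intro k
    rw [mul_assoc, hωkg, ← mul_assoc, ← map_mul, hg'g, map_one, one_mul]
  have hterm4 : ∀ k, (d (ι g') * ω ^ k) * d (ι g) = η ^ (k + 1) := by
    intro k
    rw [hcomm, mul_assoc, ← hηdef, ← pow_succ]
  -- telescoping
  have htele : ∑ k ∈ Finset.range (n + 1), (ω ^ k - ω ^ (k + 1)) = 1 - ω ^ (n + 1) := by
    rw [Finset.sum_range_sub' (fun k => ω ^ k)]
    simp
  have hteleη : ∑ k ∈ Finset.range (n + 1), (η ^ k - η ^ (k + 1)) = 1 - η ^ (n + 1) := by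
    rw [Finset.sum_range_sub' (fun k => η ^ k)]
    simp
  have hmemω : -(ω ^ (n + 1)) ∈ (⨆ k, 𝒜 (2 * (n + 1) + 2 * k)) := by
    apply neg_mem
    apply le_iSup (fun k => 𝒜 (2 * (n + 1) + 2 * k)) 0
    simpa using hpow ω hωm (n + 1)
  have hmemη : -(η ^ (n + 1)) ∈ (⨆ k, 𝒜 (2 * (n + 1) + 2 * k)) := by
    apply neg_mem
    apply le_iSup (fun k => 𝒜 (2 * (n + 1) + 2 * k)) 0
    simpa using hpow η hηm (n + 1)
  constructor
  · have heq : (ι g * (∑ k ∈ Finset.range (n + 1), ι g' * ω ^ k)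
        - d (ι g) * d (∑ k ∈ Finset.range (n + 1), ι g' * ω ^ k)) - 1
        = -(ω ^ (n + 1)) := by
      have e1 : ∑ k ∈ Finset.range (n + 1), ι g * (ι g' * ω ^ k)
          = ∑ k ∈ Finset.range (n + 1), ω ^ k :=
        Finset.sum_congr rfl fun k _ => hterm1 k
      have e2 : ∑ k ∈ Finset.range (n + 1), d (ι g) * d (ι g' * ω ^ k)
          = ∑ k ∈ Finset.range (n + 1), ω ^ (k + 1) :=
        Finset.sum_congr rfl fun k _ => by rw [hdS k, hterm2 k]
      rw [map_sum, Finset.mul_sum, Finset.mul_sum, e1, e2,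
        ← Finset.sum_sub_distrib, htele]
      abel
    rw [heq]
    exact hmemω
  · have heq : ((∑ k ∈ Finset.range (n + 1), ι g' * ω ^ k) * ι g
        - d (∑ k ∈ Finset.range (n + 1), ι g' * ω ^ k) * d (ι g)) - 1
        = -(η ^ (n + 1)) := by
      have e1 : ∑ k ∈ Finset.range (n + 1), ι g' * ω ^ k * ι g
          = ∑ k ∈ Finset.range (n + 1), η ^ k :=
        Finset.sum_congr rfl fun k _ => hterm3 k
      have e2 : ∑ k ∈ Finset.range (n + 1), d (ι g' * ω ^ k) * d (ι g)
          = ∑ k ∈ Finset.range (n + 1), η ^ (k + 1) :=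
        Finset.sum_congr rfl fun k _ => by rw [hdS k, hterm4 k]
      rw [map_sum, Finset.sum_mul, Finset.sum_mul, e1, e2,
        ← Finset.sum_sub_distrib, hteleη]
      abel
    rw [heq]
    exact hmemη
end

section
/- The ideal IA = ker(RA → A) equals ⊕_{n>0} Ω²ⁿ(A), and its (n+1)-st power with respect to the Fedosov product satisfies IA^{n+1} ⊆ ⊕_{k>n} Ω^{2k}(A); hence the quotient RA/IA^{n+1} surjects onto ⊕_{k=0}^{n} Ω^{2k}(A) as a vector space. -/
/-!
In the Fedosov product `a ∘ b = a b - da db` the correction term `da db` has degree two more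
than `a b`. Hence `∘` multiplies forms of degrees `≥ r` of the parity of `r` with forms of degrees
`≥ s` of the parity of `s` into forms of degrees `≥ r + s` of the parity of `r + s`. Since `IA`
consists of the even forms of positive degree, an `(n+1)`-fold Fedosov product of its elements
has only components of even degree `≥ 2(n+1)`.
-/

open Submodule

section Semiring

variable {R Ω : Type*} [CommSemiring R] [Semiring Ω] [Algebra R Ω] (𝒜 : ℕ → Submodule R Ω)

def parityTail (r : ℕ) : Submodule R Ω := ⨆ k, 𝒜 (r + 2 * k)

theorem parityTail_add_two_le (r : ℕ) : parityTail 𝒜 (r + 2) ≤ parityTail 𝒜 r :=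
  iSup_le fun k => le_iSup_of_le (k + 1) (by rw [show r + 2 + 2 * k = r + 2 * (k + 1) by ring])

theorem parityTail_le_comap_succ (d : Ω →ₗ[R] Ω) (hd : ∀ n, ∀ w ∈ 𝒜 n, d w ∈ 𝒜 (n + 1))
    (r : ℕ) : parityTail 𝒜 r ≤ (parityTail 𝒜 (r + 1)).comap d :=
  iSup_le fun k w hw => mem_iSup_of_mem k (by rw [add_right_comm]; exact hd _ w hw)

variable [SetLike.GradedMul 𝒜]

theorem parityTail_mul_le (r s : ℕ) :
    parityTail 𝒜 r * parityTail 𝒜 s ≤ parityTail 𝒜 (r + s) := by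
  simp only [parityTail, iSup_mul, mul_iSup]
  refine iSup₂_le fun i j => mul_le.2 fun x hx y hy => mem_iSup_of_mem (i + j) ?_
  convert SetLike.mul_mem_graded hx hy using 2
  ring

theorem mul_mem_parityTail {r s : ℕ} {a b : Ω} (ha : a ∈ parityTail 𝒜 r)
    (hb : b ∈ parityTail 𝒜 s) : a * b ∈ parityTail 𝒜 (r + s) :=
  parityTail_mul_le 𝒜 r s (mul_mem_mul ha hb)

end Semiring

section Ring

variable {R Ω : Type*} [CommRing R] [Ring Ω] [Algebra R Ω]

def fedosovMul (d : Ω →ₗ[R] Ω) (a b : Ω) : Ω := a * b - d a * d b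

variable (𝒜 : ℕ → Submodule R Ω) (d : Ω →ₗ[R] Ω)

theorem fedosovMul_mem_parityTail [SetLike.GradedMul 𝒜]
    (hd : ∀ n, ∀ w ∈ 𝒜 n, d w ∈ 𝒜 (n + 1)) {r s : ℕ} {a b : Ω} (ha : a ∈ parityTail 𝒜 r)
    (hb : b ∈ parityTail 𝒜 s) : fedosovMul d a b ∈ parityTail 𝒜 (r + s) := by
  have hdadb : d a * d b ∈ parityTail 𝒜 (r + 1 + (s + 1)) :=
    mul_mem_parityTail 𝒜 (parityTail_le_comap_succ 𝒜 d hd r ha)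
      (parityTail_le_comap_succ 𝒜 d hd s hb)
  rw [show r + 1 + (s + 1) = r + s + 2 by ring] at hdadb
  exact sub_mem (mul_mem_parityTail 𝒜 ha hb) (parityTail_add_two_le 𝒜 _ hdadb)

theorem foldr_fedosovMul_mem_parityTail [SetLike.GradedMonoid 𝒜]
    (hd : ∀ n, ∀ w ∈ 𝒜 n, d w ∈ 𝒜 (n + 1)) {r : ℕ} (l : List Ω) (hl : ∀ w ∈ l, w ∈ parityTail 𝒜 r) :
    l.foldr (fedosovMul d) 1 ∈ parityTail 𝒜 (r * l.length) := by
  induction l with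
  | nil => exact mem_iSup_of_mem 0 (by simpa using SetLike.GradedOne.one_mem)
  | cons a l ih =>
    rw [List.forall_mem_cons] at hl
    rw [List.foldr_cons, List.length_cons, mul_add_one, add_comm]
    exact fedosovMul_mem_parityTail 𝒜 d hd hl.1 (ih hl.2)

end Ring

theorem sup_inf_ker_eq_right {R M : Type*} [Semiring R] [AddCommMonoid M] [Module R M]
    (π : M →ₗ[R] M) {P J : Submodule R M} (hP : ∀ w ∈ P, π w = w) (hJ : J ≤ LinearMap.ker π) :
    (P ⊔ J) ⊓ LinearMap.ker π = J := by
  refine le_antisymm (fun w hw => ?_) (le_inf le_sup_right hJ)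
  obtain ⟨hsup, hker⟩ := mem_inf.1 hw
  obtain ⟨p, hp, j, hj, rfl⟩ := mem_sup.1 hsup
  have hp0 : p = 0 := by
    simpa [hP p hp, LinearMap.mem_ker.1 (hJ hj)] using hker
  simpa [hp0] using hj

theorem iSup_le_biSup_range_sup_iSup_add {α : Type*} [CompleteLattice α] (f : ℕ → α) (n : ℕ) :
    ⨆ k, f k ≤ (⨆ k ∈ Finset.range n, f k) ⊔ ⨆ k, f (n + k) := by
  refine iSup_le fun k => ?_
  rcases lt_or_ge k n with hk | hk
  · exact le_sup_of_le_left (le_biSup f (Finset.mem_range.2 hk))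
  · obtain ⟨j, rfl⟩ := Nat.exists_eq_add_of_le hk
    exact le_sup_of_le_right (le_iSup (fun j => f (n + j)) j)

theorem ideal_IA_and_its_powers_general (A Ω : Type) [Ring A] [Algebra ℂ A] [Ring Ω] [Algebra ℂ Ω]
    (ι : A →ₐ[ℂ] Ω) (d : Ω →ₗ[ℂ] Ω) (𝒜 : ℕ → Submodule ℂ Ω)
    (hgrade : ∀ n, 𝒜 n = Submodule.span ℂ
      {w | ∃ (x₀ : A) (l : List A), l.length = n ∧ w = ι x₀ * (l.map (fun x => d (ι x))).prod})
    (hdeg : ∀ n, ∀ w ∈ 𝒜 n, d w ∈ 𝒜 (n + 1))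
    (hmul : ∀ m n, ∀ a ∈ 𝒜 m, ∀ b ∈ 𝒜 n, a * b ∈ 𝒜 (m + n))
    (π : Ω →ₗ[ℂ] Ω)
    (hπ : ∀ n, ∀ w ∈ 𝒜 n, π w = if n = 0 then w else 0) :
    ((⨆ k, 𝒜 (2 * k)) ⊓ LinearMap.ker π = ⨆ k, 𝒜 (2 * (k + 1))) ∧
    (∀ n : ℕ, ∀ l : List Ω, l.length = n + 1 →
      (∀ w ∈ l, w ∈ (⨆ k, 𝒜 (2 * k)) ⊓ LinearMap.ker π) →
      l.foldr (fun a b => a * b - d a * d b) 1 ∈ ⨆ k, 𝒜 (2 * (n + 1) + 2 * k)) ∧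
    (∀ n : ℕ, (⨆ k, 𝒜 (2 * k)) ≤
      (⨆ k ∈ Finset.range (n + 1), 𝒜 (2 * k)) ⊔ ⨆ k, 𝒜 (2 * (n + 1) + 2 * k)) := by
  have hone : (1 : Ω) ∈ 𝒜 0 := by
    rw [hgrade]
    exact subset_span ⟨1, [], rfl, by simp⟩
  have : SetLike.GradedMonoid 𝒜 :=
    { one_mem := hone, mul_mem := fun _ _ _ _ ha hb => hmul _ _ _ ha _ hb }
  have hIA : (⨆ k, 𝒜 (2 * k)) ⊓ LinearMap.ker π = ⨆ k, 𝒜 (2 * (k + 1)) := by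
    rw [← sup_iSup_nat_succ]
    exact sup_inf_ker_eq_right π (fun w hw => by simpa using hπ 0 w hw)
      (iSup_le fun k w hw => by simp [LinearMap.mem_ker, hπ _ w hw])
  have hIA_tail : (⨆ k, 𝒜 (2 * k)) ⊓ LinearMap.ker π = parityTail 𝒜 2 :=
    hIA.trans <| iSup_congr fun k => by rw [mul_add, mul_one, add_comm]
  refine ⟨hIA, fun n l hlen hl => ?_, fun n => ?_⟩
  · rw [← hlen]
    exact foldr_fedosovMul_mem_parityTail 𝒜 d hdeg l fun w hw => hIA_tail ▸ hl w hw
  · simpa only [mul_add] using iSup_le_biSup_range_sup_iSup_add (fun k => 𝒜 (2 * k)) (n + 1)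

theorem ideal_IA_and_its_powers (A Ω : Type) [Ring A] [Algebra ℂ A] [Ring Ω] [Algebra ℂ Ω]
    (ι : A →ₐ[ℂ] Ω) (d : Ω →ₗ[ℂ] Ω) (𝒜 : ℕ → Submodule ℂ Ω)
    (hgrade : ∀ n, 𝒜 n = Submodule.span ℂ
      {w | ∃ (x₀ : A) (l : List A), l.length = n ∧ w = ι x₀ * (l.map (fun x => d (ι x))).prod})
    (htop : (⨆ n, 𝒜 n) = (⊤ : Submodule ℂ Ω))
    (hd1 : d 1 = 0)
    (hdrule : ∀ (x₀ : A) (l : List A),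
      d (ι x₀ * (l.map (fun x => d (ι x))).prod) = d (ι x₀) * (l.map (fun x => d (ι x))).prod)
    (hbase : ∀ x y : A, d (ι x) * ι y = d (ι (x * y)) - ι x * d (ι y))
    (hdeg : ∀ n, ∀ w ∈ 𝒜 n, d w ∈ 𝒜 (n + 1))
    (hmul : ∀ m n, ∀ a ∈ 𝒜 m, ∀ b ∈ 𝒜 n, a * b ∈ 𝒜 (m + n))
    (hd2 : ∀ w, d (d w) = 0)
    (hleib : ∀ n, ∀ a ∈ 𝒜 n, ∀ b, d (a * b) = d a * b + ((-1 : ℂ) ^ n) • (a * d b))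
    (π : Ω →ₗ[ℂ] Ω)
    (hπ : ∀ n, ∀ w ∈ 𝒜 n, π w = if n = 0 then w else 0) :
    ((⨆ k, 𝒜 (2 * k)) ⊓ LinearMap.ker π = ⨆ k, 𝒜 (2 * (k + 1))) ∧
    (∀ n : ℕ, ∀ l : List Ω, l.length = n + 1 →
      (∀ w ∈ l, w ∈ (⨆ k, 𝒜 (2 * k)) ⊓ LinearMap.ker π) →
      l.foldr (fun a b => a * b - d a * d b) 1 ∈ ⨆ k, 𝒜 (2 * (n + 1) + 2 * k)) ∧
    (∀ n : ℕ, (⨆ k, 𝒜 (2 * k)) ≤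
      (⨆ k ∈ Finset.range (n + 1), 𝒜 (2 * k)) ⊔ ⨆ k, 𝒜 (2 * (n + 1) + 2 * k)) :=
  ideal_IA_and_its_powers_general A Ω ι d 𝒜 hgrade hdeg hmul π hπ
end
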